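/- arXiv:2309.17228 — 5 statements merged into one kernel-verified Lean document; each statement's English description precedes it below -/
import Mathlib

section
/- For a complex number λ with nonzero real part, the integral over ℝ of 1/|t² + λ²|² dt equals π / (2 |λ|² |Re(λ)|). -/
/-!
Write `f t = 1 / ‖t² + λ²‖²` and `t² + λ² = (t + iλ)(t - iλ)`. By the parallelogram law,
`(t² + ‖λ‖²) f t` is the mean of the two Cauchy kernels `1 / ‖t ± iλ‖²`, each of integral
`π / |Re λ|`. The inversion `t ↦ ‖λ‖² / t` maps `f` to `t⁴ f t / ‖λ‖⁴`, whence
`∫ t² f = ‖λ‖² ∫ f`, and so `2 ‖λ‖² ∫ f = π / |Re λ|`.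
-/

open MeasureTheory Real Set Complex ComplexConjugate

theorem integral_abs_div_sq_smul_comp_const_div {E : Type*} [NormedAddCommGroup E]
    [NormedSpace ℝ E] (g : ℝ → E) {c : ℝ} (hc : c ≠ 0) :
    ∫ x, (|c| / x ^ 2) • g (c / x) = ∫ x, g x := by
  have himage : (fun x : ℝ => c / x) '' {0}ᶜ = {0}ᶜ := by
    ext y
    simp only [mem_image, mem_compl_singleton_iff]
    constructor
    · rintro ⟨x, hx, rfl⟩
      exact div_ne_zero hc hx
    · intro hy
      exact ⟨c / y, div_ne_zero hc hy, by field_simp⟩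
  have hderiv : ∀ x ∈ ({0}ᶜ : Set ℝ), HasDerivWithinAt (fun x => c / x) (-c / x ^ 2) {0}ᶜ x :=
    fun x hx => by
      simpa [div_eq_mul_inv, neg_div] using ((hasDerivAt_inv hx).const_mul c).hasDerivWithinAt
  have hinj : InjOn (fun x : ℝ => c / x) {0}ᶜ := fun x _ y _ hxy => by
    simpa [hc, div_eq_mul_inv] using hxy
  have := integral_image_eq_integral_abs_deriv_smul (measurableSet_singleton 0).compl hderiv hinj g
  simpa [himage, abs_div, abs_neg] using this.symm

theorem one_div_add_sq_add_sq_eq (c : ℝ) {a : ℝ} (ha : a ≠ 0) (t : ℝ) :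
    1 / ((t + c) ^ 2 + a ^ 2) = (a ^ 2)⁻¹ * (1 + ((t + c) / a) ^ 2)⁻¹ := by
  field_simp
  ring

theorem integrable_one_div_add_sq_add_sq (c : ℝ) {a : ℝ} (ha : a ≠ 0) :
    Integrable fun t : ℝ => 1 / ((t + c) ^ 2 + a ^ 2) := by
  simp_rw [one_div_add_sq_add_sq_eq c ha]
  exact ((integrable_inv_one_add_sq.comp_div ha).const_mul _).comp_add_right c

theorem integral_one_div_add_sq_add_sq (c : ℝ) {a : ℝ} (ha : a ≠ 0) :
    ∫ t : ℝ, 1 / ((t + c) ^ 2 + a ^ 2) = π / |a| := by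
  simp_rw [one_div_add_sq_add_sq_eq c ha]
  rw [integral_add_right_eq_self (fun t => (a ^ 2)⁻¹ * (1 + (t / a) ^ 2)⁻¹) c,
    integral_const_mul, Measure.integral_comp_div (fun t => (1 + t ^ 2)⁻¹),
    integral_univ_inv_one_add_sq, smul_eq_mul, ← sq_abs]
  have : |a| ≠ 0 := abs_ne_zero.mpr ha
  field_simp

theorem sq_norm_ofReal_add (t : ℝ) (w : ℂ) : ‖(t : ℂ) + w‖ ^ 2 = (t + w.re) ^ 2 + w.im ^ 2 := by
  rw [Complex.sq_norm, Complex.normSq_apply]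
  simp only [add_re, add_im, ofReal_re, ofReal_im, zero_add]
  ring

theorem integrable_one_div_sq_norm_ofReal_add {w : ℂ} (hw : w.im ≠ 0) :
    Integrable fun t : ℝ => 1 / ‖(t : ℂ) + w‖ ^ 2 := by
  simpa only [sq_norm_ofReal_add] using integrable_one_div_add_sq_add_sq w.re hw

theorem integral_one_div_sq_norm_ofReal_add {w : ℂ} (hw : w.im ≠ 0) :
    ∫ t : ℝ, 1 / ‖(t : ℂ) + w‖ ^ 2 = π / |w.im| := by
  simpa only [sq_norm_ofReal_add] using integral_one_div_add_sq_add_sq w.re hw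

theorem one_div_sq_norm_add_add_one_div_sq_norm_sub {z w : ℂ} (hadd : z + w ≠ 0)
    (hsub : z - w ≠ 0) :
    1 / ‖z + w‖ ^ 2 + 1 / ‖z - w‖ ^ 2 = 2 * (‖z‖ ^ 2 + ‖w‖ ^ 2) / ‖z ^ 2 - w ^ 2‖ ^ 2 := by
  have hfactor : z ^ 2 - w ^ 2 = (z + w) * (z - w) := by ring
  rw [hfactor, norm_mul, ← parallelogram_law_with_norm ℝ z w]
  have : ‖z + w‖ ≠ 0 := norm_ne_zero_iff.mpr hadd
  have : ‖z - w‖ ≠ 0 := norm_ne_zero_iff.mpr hsub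
  field_simp
  ring

theorem norm_ofReal_sq_norm_div_sq_add_sq (w : ℂ) {x : ℝ} (hx : x ≠ 0) :
    ‖((‖w‖ ^ 2 / x : ℝ) : ℂ) ^ 2 + w ^ 2‖ = ‖w‖ ^ 2 * ‖(x : ℂ) ^ 2 + w ^ 2‖ / x ^ 2 := by
  have hconj : ((‖w‖ ^ 2 / x : ℝ) : ℂ) ^ 2 + w ^ 2
      = w ^ 2 * conj ((x : ℂ) ^ 2 + w ^ 2) / (x : ℂ) ^ 2 := by
    have hx' : (x : ℂ) ≠ 0 := by exact_mod_cast hx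
    push_cast
    rw [← Complex.mul_conj', map_add, map_pow, map_pow, conj_ofReal]
    field_simp
    ring
  rw [hconj, norm_div, norm_mul, norm_conj, norm_pow, norm_pow]
  simp

theorem integral_sq_mul_one_div_sq_norm_sq_add_sq {w : ℂ} (hw : w ≠ 0) :
    ∫ t : ℝ, t ^ 2 * (1 / ‖(t : ℂ) ^ 2 + w ^ 2‖ ^ 2)
      = ‖w‖ ^ 2 * ∫ t : ℝ, 1 / ‖(t : ℂ) ^ 2 + w ^ 2‖ ^ 2 := by
  have hr : ‖w‖ ^ 2 ≠ 0 := by positivity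
  conv_rhs => rw [← integral_abs_div_sq_smul_comp_const_div _ hr, ← integral_const_mul]
  congr 1 with t
  rcases eq_or_ne t 0 with rfl | ht
  · simp
  · rw [smul_eq_mul, norm_ofReal_sq_norm_div_sq_add_sq w ht, abs_of_pos (by positivity)]
    field_simp

section

variable {lam : ℂ} (h : lam.re ≠ 0)
include h

theorem sq_add_sq_norm_mul_one_div_sq_norm_sq_add_sq (t : ℝ) :
    (t ^ 2 + ‖lam‖ ^ 2) * (1 / ‖(t : ℂ) ^ 2 + lam ^ 2‖ ^ 2)
      = (1 / ‖(t : ℂ) + I * lam‖ ^ 2 + 1 / ‖(t : ℂ) + -(I * lam)‖ ^ 2) / 2 := by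
  have hadd : (t : ℂ) + I * lam ≠ 0 := fun h0 => h (by simpa using congrArg im h0)
  have hsub : (t : ℂ) - I * lam ≠ 0 := fun h0 => h (by simpa using congrArg im h0)
  have hfactor : (t : ℂ) ^ 2 - (I * lam) ^ 2 = t ^ 2 + lam ^ 2 := by rw [mul_pow, I_sq]; ring
  simp only [← sub_eq_add_neg, one_div_sq_norm_add_add_one_div_sq_norm_sub hadd hsub, hfactor,
    norm_mul, norm_I, one_mul, norm_real, Real.norm_eq_abs, sq_abs]
  field_simp

theorem integrable_sq_add_sq_norm_mul_one_div_sq_norm_sq_add_sq :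
    Integrable fun t : ℝ => (t ^ 2 + ‖lam‖ ^ 2) * (1 / ‖(t : ℂ) ^ 2 + lam ^ 2‖ ^ 2) := by
  simp_rw [sq_add_sq_norm_mul_one_div_sq_norm_sq_add_sq h]
  exact ((integrable_one_div_sq_norm_ofReal_add (by simpa using h)).add
    (integrable_one_div_sq_norm_ofReal_add (by simpa using h))).div_const 2

theorem integral_sq_add_sq_norm_mul_one_div_sq_norm_sq_add_sq :
    ∫ t : ℝ, (t ^ 2 + ‖lam‖ ^ 2) * (1 / ‖(t : ℂ) ^ 2 + lam ^ 2‖ ^ 2) = π / |lam.re| := by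
  have hw₁ : (I * lam).im ≠ 0 := by simpa using h
  have hw₂ : (-(I * lam)).im ≠ 0 := by simpa using h
  simp_rw [sq_add_sq_norm_mul_one_div_sq_norm_sq_add_sq h]
  rw [integral_div, integral_add (integrable_one_div_sq_norm_ofReal_add hw₁)
      (integrable_one_div_sq_norm_ofReal_add hw₂),
    integral_one_div_sq_norm_ofReal_add hw₁, integral_one_div_sq_norm_ofReal_add hw₂]
  simp only [mul_im, I_re, I_im, zero_mul, one_mul, zero_add, neg_im, abs_neg]
  ring

theorem integrable_one_div_sq_norm_sq_add_sq :
    Integrable fun t : ℝ => 1 / ‖(t : ℂ) ^ 2 + lam ^ 2‖ ^ 2 := by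
  have hr : 0 < ‖lam‖ ^ 2 := by
    have : lam ≠ 0 := fun h0 => h (by simp [h0])
    positivity
  refine ((integrable_sq_add_sq_norm_mul_one_div_sq_norm_sq_add_sq h).const_mul
    (‖lam‖ ^ 2)⁻¹).mono' (by fun_prop : Measurable _).aestronglyMeasurable
    (Filter.Eventually.of_forall fun t => ?_)
  have hnonneg : 0 ≤ 1 / ‖(t : ℂ) ^ 2 + lam ^ 2‖ ^ 2 := by positivity
  rw [Real.norm_of_nonneg hnonneg, le_inv_mul_iff₀ hr]
  exact mul_le_mul_of_nonneg_right (by nlinarith [sq_nonneg t]) hnonneg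

end

theorem integral_one_div_sq_abs_sq_add_sq (lam : ℂ) (h : lam.re ≠ 0) :
    ∫ t : ℝ, 1 / ‖(t : ℂ) ^ 2 + lam ^ 2‖ ^ 2
      = π / (2 * ‖lam‖ ^ 2 * |lam.re|) := by
  set f : ℝ → ℝ := fun t => 1 / ‖(t : ℂ) ^ 2 + lam ^ 2‖ ^ 2
  have hlam : lam ≠ 0 := fun h0 => h (by simp [h0])
  have hf_int : Integrable f := integrable_one_div_sq_norm_sq_add_sq h
  have hsq_int : Integrable fun t : ℝ => t ^ 2 * f t :=
    ((integrable_sq_add_sq_norm_mul_one_div_sq_norm_sq_add_sq h).sub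
      (hf_int.const_mul (‖lam‖ ^ 2))).congr (Filter.Eventually.of_forall fun t => by
        simp only [Pi.sub_apply, f]
        ring)
  have key : 2 * ‖lam‖ ^ 2 * ∫ t, f t = π / |lam.re| :=
    calc 2 * ‖lam‖ ^ 2 * ∫ t, f t = ∫ t, (t ^ 2 * f t + ‖lam‖ ^ 2 * f t) := by
          rw [integral_add hsq_int (hf_int.const_mul _), integral_const_mul,
            integral_sq_mul_one_div_sq_norm_sq_add_sq hlam]
          ring
      _ = ∫ t, (t ^ 2 + ‖lam‖ ^ 2) * f t := by simp only [add_mul]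
      _ = π / |lam.re| := integral_sq_add_sq_norm_mul_one_div_sq_norm_sq_add_sq h
  have hr : 2 * ‖lam‖ ^ 2 ≠ 0 := by positivity
  rw [mul_comm (2 * ‖lam‖ ^ 2), ← div_div, ← key]
  field_simp
end

section
/- For real numbers a > 0 and c with |c| ≤ a², the integral ∫₀^∞ dx / √(x⁴ + 2c x² + a⁴) equals (1/a) · K(√(a² − c)/(a√2)), where K(k) = ∫₀^{π/2} dθ / √(1 − k² sin²θ) is the complete elliptic integral of the first kind. -/
open MeasureTheory Real

/-- The complete elliptic integral of the first kind. -/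
noncomputable def ellipticK (k : ℝ) : ℝ :=
  ∫ θ in (0 : ℝ)..(π / 2), 1 / Real.sqrt (1 - k ^ 2 * Real.sin θ ^ 2)

/-!
Substituting `x = a tan θ` turns `x⁴ + 2c x² + a⁴` into `(a² / cos² θ)² (1 - k² sin² 2θ)` with
`k² = (a² - c) / (2a²)`, and the Jacobian `a / cos² θ` cancels all but a factor `1 / a`. The
remaining integral of `1 / √(1 - k² sin² 2θ)` over `[0, π/2]` equals `K(k)`, because
`φ = 2θ` doubles the interval and `sin (π - φ) = sin φ` folds it back.
-/

variable {E : Type*} [NormedAddCommGroup E] [NormedSpace ℝ E]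

theorem intervalIntegral.integral_zero_two_mul_eq_two_smul_of_symm (f : ℝ → E) (b : ℝ)
    (hf : ∀ x, f (2 * b - x) = f x) :
    ∫ x in (0 : ℝ)..2 * b, f x = (2 : ℝ) • ∫ x in (0 : ℝ)..b, f x := by
  have hreflect : ∫ x in b..2 * b, f x = ∫ x in (0 : ℝ)..b, f x := by
    simpa only [hf, sub_zero, show 2 * b - b = b by ring] using
      (intervalIntegral.integral_comp_sub_left (a := 0) (b := b) f (2 * b)).symm
  by_cases hint : IntervalIntegrable f volume 0 b
  · have hint' : IntervalIntegrable f volume b (2 * b) := by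
      simpa only [hf, sub_zero, show 2 * b - b = b by ring] using
        (hint.comp_sub_left (2 * b)).symm
    rw [← intervalIntegral.integral_add_adjacent_intervals hint hint', hreflect, two_smul]
  · have hb : b ∈ Set.uIcc 0 (2 * b) := by
      rw [Set.mem_uIcc]; rcases le_total 0 b with h | h
      · exact Or.inl ⟨h, by linarith⟩
      · exact Or.inr ⟨by linarith, h⟩
    have hint' : ¬IntervalIntegrable f volume 0 (2 * b) := fun h =>
      hint (h.mono_set (Set.uIcc_subset_uIcc Set.left_mem_uIcc hb))
    rw [intervalIntegral.integral_undef hint, intervalIntegral.integral_undef hint', smul_zero]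

theorem intervalIntegral.integral_comp_sin_two_mul (g : ℝ → E) :
    ∫ θ in (0 : ℝ)..π / 2, g (sin (2 * θ)) = ∫ θ in (0 : ℝ)..π / 2, g (sin θ) := by
  have hsymm : ∀ x, g (sin (2 * (π / 2) - x)) = g (sin x) := fun x => by
    rw [mul_div_cancel₀ π two_ne_zero, sin_pi_sub]
  rw [intervalIntegral.integral_comp_mul_left (fun φ => g (sin φ)) two_ne_zero, mul_zero,
    intervalIntegral.integral_zero_two_mul_eq_two_smul_of_symm _ _ hsymm, smul_smul,
    inv_mul_cancel₀ two_ne_zero, one_smul]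

theorem integral_Ioi_zero_eq_integral_comp_mul_tan (g : ℝ → E) {a : ℝ} (ha : 0 < a) :
    ∫ x in Set.Ioi (0 : ℝ), g x
      = ∫ θ in (0 : ℝ)..π / 2, (a / cos θ ^ 2) • g (a * tan θ) := by
  have hIoo : ∀ θ ∈ Set.Ioo (0 : ℝ) (π / 2), θ ∈ Set.Ioo (-(π / 2)) (π / 2) :=
    fun θ hθ => ⟨by linarith [pi_pos, hθ.1], hθ.2⟩
  have himage : Set.Ioi (0 : ℝ) = (fun θ => a * tan θ) '' Set.Ioo 0 (π / 2) := by
    ext y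
    refine ⟨fun hy => ⟨arctan (y / a), ⟨?_, arctan_lt_pi_div_two _⟩, ?_⟩, ?_⟩
    · simpa using arctan_strictMono (div_pos (Set.mem_Ioi.mp hy) ha)
    · simp only [tan_arctan]; field_simp
    · rintro ⟨θ, hθ, rfl⟩
      exact mul_pos ha (tan_pos_of_pos_of_lt_pi_div_two hθ.1 hθ.2)
  have hderiv : ∀ θ ∈ Set.Ioo (0 : ℝ) (π / 2),
      HasDerivWithinAt (fun θ => a * tan θ) (a / cos θ ^ 2) (Set.Ioo 0 (π / 2)) θ := by
    intro θ hθ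
    simpa only [mul_one_div] using
      ((hasDerivAt_tan (cos_pos_of_mem_Ioo (hIoo θ hθ)).ne').const_mul a).hasDerivWithinAt
  have hinj : Set.InjOn (fun θ => a * tan θ) (Set.Ioo 0 (π / 2)) := fun x hx y hy hxy =>
    injOn_tan (hIoo x hx) (hIoo y hy) (mul_left_cancel₀ ha.ne' hxy)
  rw [himage, integral_image_eq_integral_abs_deriv_smul measurableSet_Ioo hderiv hinj,
    intervalIntegral.integral_of_le (by positivity), integral_Ioc_eq_integral_Ioo]
  refine setIntegral_congr_fun measurableSet_Ioo fun θ hθ => ?_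
  have hcos := cos_pos_of_mem_Ioo (hIoo θ hθ)
  rw [abs_of_pos (by positivity)]

theorem quartic_mul_tan_eq {a c θ : ℝ} (ha : a ≠ 0) (hθ : cos θ ≠ 0) :
    (a * tan θ) ^ 4 + 2 * c * (a * tan θ) ^ 2 + a ^ 4
      = (a ^ 2 / cos θ ^ 2) ^ 2 * (1 - (a ^ 2 - c) / (2 * a ^ 2) * sin (2 * θ) ^ 2) := by
  rw [tan_eq_sin_div_cos, sin_two_mul]
  field_simp
  linear_combination a ^ 2 * (sin θ ^ 2 + cos θ ^ 2 + 1) * sin_sq_add_cos_sq θ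

theorem integral_one_div_sqrt_quartic (a c : ℝ) (ha : 0 < a) (hc : |c| ≤ a ^ 2) :
    ∫ x in Set.Ioi (0 : ℝ), 1 / Real.sqrt (x ^ 4 + 2 * c * x ^ 2 + a ^ 4)
      = (1 / a) * ellipticK (Real.sqrt (a ^ 2 - c) / (a * Real.sqrt 2)) := by
  set k := Real.sqrt (a ^ 2 - c) / (a * Real.sqrt 2)
  have hk : k ^ 2 = (a ^ 2 - c) / (2 * a ^ 2) := by
    rw [div_pow, mul_pow, sq_sqrt (by linarith [le_of_abs_le hc]), sq_sqrt zero_le_two]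
    ring
  have hintegrand : Set.EqOn
      (fun θ => (a / cos θ ^ 2) • (1 / √((a * tan θ) ^ 4 + 2 * c * (a * tan θ) ^ 2 + a ^ 4)))
      (fun θ => 1 / a * (1 / √(1 - k ^ 2 * sin (2 * θ) ^ 2))) (Set.Ioo 0 (π / 2)) := by
    intro θ hθ
    have hcos : 0 < cos θ := cos_pos_of_mem_Ioo ⟨by linarith [pi_pos, hθ.1], hθ.2⟩
    dsimp only
    rw [quartic_mul_tan_eq ha.ne' hcos.ne', ← hk, sqrt_mul (sq_nonneg _), sqrt_sq (by positivity),
      smul_eq_mul]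
    field_simp
  rw [integral_Ioi_zero_eq_integral_comp_mul_tan _ ha,
    intervalIntegral.integral_congr_Ioo_of_le (by positivity) hintegrand,
    intervalIntegral.integral_const_mul,
    intervalIntegral.integral_comp_sin_two_mul (fun s => 1 / √(1 - k ^ 2 * s ^ 2)), ellipticK]
end

section
/- For k ∈ (-1, 1), the complete elliptic integral of the first kind satisfies K(k) ≤ (π/2)(1 − (1/π) · log(1 − k²)). -/
/-!
Write `m = k²` and `Δ = √(1 - m sin²θ)`. Differentiating under the integral sign gives
`K'(m) = ½ ∫ sin²θ / Δ³`; since `sin θ cos θ / Δ` vanishes at `0` and `π/2` and has derivative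
`cos²θ / Δ - (1 - m) sin²θ / Δ³`, this is `K'(m) = ∫ cos²θ / Δ / (2 (1 - m))`. As `Δ ≥ cos θ`,
the last integral is at most `∫ cos θ = 1`, so `K'(m) ≤ 1 / (2 (1 - m))`, the derivative of
`π/2 - ½ log (1 - m)`; both sides equal `π/2` at `m = 0`.
-/

open MeasureTheory Real

open intervalIntegral Set

noncomputable def ellipticKParam (m : ℝ) : ℝ :=
  ∫ θ in (0 : ℝ)..(π / 2), 1 / √(1 - m * sin θ ^ 2)

lemma min_one_one_sub_le_one_sub_mul_sin_sq (m θ : ℝ) :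
    min 1 (1 - m) ≤ 1 - m * sin θ ^ 2 := by
  rcases le_or_gt m 0 with hm | hm
  · exact (min_le_left _ _).trans (by nlinarith [sq_nonneg (sin θ)])
  · exact (min_le_right _ _).trans (by nlinarith [sin_sq_le_one θ])

lemma one_sub_mul_sin_sq_pos {m : ℝ} (hm : m < 1) (θ : ℝ) : 0 < 1 - m * sin θ ^ 2 :=
  (lt_min one_pos (sub_pos.2 hm)).trans_le (min_one_one_sub_le_one_sub_mul_sin_sq m θ)

lemma cos_le_sqrt_one_sub_mul_sin_sq {m : ℝ} (hm : m ≤ 1) (θ : ℝ) :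
    cos θ ≤ √(1 - m * sin θ ^ 2) := by
  calc cos θ ≤ √(cos θ ^ 2) := by rw [sqrt_sq_eq_abs]; exact le_abs_self _
    _ ≤ √(1 - m * sin θ ^ 2) := by
      gcongr
      nlinarith [sin_sq_add_cos_sq θ, sq_nonneg (sin θ)]

lemma continuous_cos_sq_div_sqrt_one_sub_mul_sin_sq {m : ℝ} (hm : m < 1) :
    Continuous fun θ ↦ cos θ ^ 2 / √(1 - m * sin θ ^ 2) :=
  (by fun_prop : Continuous fun θ ↦ cos θ ^ 2).div (by fun_prop) fun θ ↦
    (sqrt_pos.2 (one_sub_mul_sin_sq_pos hm θ)).ne'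

lemma continuous_sin_sq_div_one_sub_mul_sin_sq_mul_sqrt {m : ℝ} (hm : m < 1) :
    Continuous fun θ ↦ sin θ ^ 2 / ((1 - m * sin θ ^ 2) * √(1 - m * sin θ ^ 2)) :=
  (by fun_prop : Continuous fun θ ↦ sin θ ^ 2).div (by fun_prop) fun θ ↦
    (mul_pos (one_sub_mul_sin_sq_pos hm θ) (sqrt_pos.2 (one_sub_mul_sin_sq_pos hm θ))).ne'

lemma integral_cos_sq_div_sqrt_le_one {m : ℝ} (hm : m < 1) :
    ∫ θ in (0 : ℝ)..(π / 2), cos θ ^ 2 / √(1 - m * sin θ ^ 2) ≤ 1 := by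
  calc ∫ θ in (0 : ℝ)..(π / 2), cos θ ^ 2 / √(1 - m * sin θ ^ 2)
      ≤ ∫ θ in (0 : ℝ)..(π / 2), cos θ := by
        refine integral_mono_on (by positivity)
          ((continuous_cos_sq_div_sqrt_one_sub_mul_sin_sq hm).intervalIntegrable _ _)
          (continuous_cos.intervalIntegrable _ _) fun θ hθ ↦ ?_
        have hc : 0 ≤ cos θ := cos_nonneg_of_mem_Icc ⟨by linarith [hθ.1, pi_pos], hθ.2⟩
        rw [div_le_iff₀ (sqrt_pos.2 (one_sub_mul_sin_sq_pos hm θ)), sq]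
        exact mul_le_mul_of_nonneg_left (cos_le_sqrt_one_sub_mul_sin_sq hm.le θ) hc
    _ = 1 := by simp

lemma hasDerivAt_sin_mul_cos_div_sqrt {m : ℝ} (hm : m < 1) (θ : ℝ) :
    HasDerivAt (fun θ ↦ sin θ * cos θ / √(1 - m * sin θ ^ 2))
      (cos θ ^ 2 / √(1 - m * sin θ ^ 2)
        - (1 - m) * (sin θ ^ 2 / ((1 - m * sin θ ^ 2) * √(1 - m * sin θ ^ 2)))) θ := by
  have hD := one_sub_mul_sin_sq_pos hm θ
  have hΔ := sqrt_pos.2 hD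
  have hΔ' := (((hasDerivAt_sin θ).fun_pow 2).const_mul m).const_sub 1 |>.sqrt hD.ne'
  refine ((hasDerivAt_sin θ).fun_mul (hasDerivAt_cos θ)).fun_div hΔ' hΔ.ne' |>.congr_deriv ?_
  have hsq := sq_sqrt hD.le
  simp only [Nat.cast_ofNat, pow_one, Nat.add_one_sub_one]
  generalize √(1 - m * sin θ ^ 2) = S at hΔ hsq ⊢
  rw [← hsq]
  field_simp
  linear_combination (-sin θ ^ 2) * hsq + m * sin θ ^ 2 * sin_sq_add_cos_sq θ

lemma integral_cos_sq_div_sqrt_eq {m : ℝ} (hm : m < 1) :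
    ∫ θ in (0 : ℝ)..(π / 2), cos θ ^ 2 / √(1 - m * sin θ ^ 2)
      = (1 - m) * ∫ θ in (0 : ℝ)..(π / 2),
          sin θ ^ 2 / ((1 - m * sin θ ^ 2) * √(1 - m * sin θ ^ 2)) := by
  have hcont₁ := continuous_cos_sq_div_sqrt_one_sub_mul_sin_sq hm
  have hcont₂ := continuous_sin_sq_div_one_sub_mul_sin_sq_mul_sqrt hm
  have hFTC := integral_eq_sub_of_hasDerivAt (fun θ _ ↦ hasDerivAt_sin_mul_cos_div_sqrt hm θ)
    ((hcont₁.sub (continuous_const.mul hcont₂)).intervalIntegrable 0 (π / 2))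
  rw [integral_sub (hcont₁.intervalIntegrable _ _)
    ((hcont₂.intervalIntegrable _ _).const_mul (1 - m)),
    intervalIntegral.integral_const_mul] at hFTC
  simp only [cos_pi_div_two, sin_zero, mul_zero, zero_mul, zero_div, sub_zero] at hFTC
  linarith

lemma hasDerivAt_one_div_sqrt_one_sub_mul {m x : ℝ} (h : 0 < 1 - m * x) :
    HasDerivAt (fun m ↦ 1 / √(1 - m * x)) (x / ((1 - m * x) * √(1 - m * x)) / 2) m := by
  have hΔ := sqrt_pos.2 h
  refine ((hasDerivAt_const m (1 : ℝ)).fun_div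
    (((hasDerivAt_id m).mul_const x).const_sub 1 |>.sqrt h.ne') hΔ.ne').congr_deriv ?_
  have hsq := sq_sqrt h.le
  simp only [id]
  generalize √(1 - m * x) = S at hΔ hsq ⊢
  rw [← hsq]
  field_simp
  ring

lemma hasDerivAt_ellipticKParam {m : ℝ} (hm : m < 1) :
    HasDerivAt ellipticKParam
      ((∫ θ in (0 : ℝ)..(π / 2), cos θ ^ 2 / √(1 - m * sin θ ^ 2)) / (2 * (1 - m)))
      m := by
  set δ := min 1 ((1 - m) / 2)
  have hδ : 0 < δ := lt_min one_pos (by linarith)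
  have hlow : ∀ m' ∈ Metric.ball m ((1 - m) / 2), ∀ θ, δ ≤ 1 - m' * sin θ ^ 2 := by
    intro m' hm' θ
    rw [Metric.mem_ball, dist_eq, abs_lt] at hm'
    exact (min_le_min_left 1 (by linarith)).trans (min_one_one_sub_le_one_sub_mul_sin_sq m' θ)
  have hball : Metric.ball m ((1 - m) / 2) ∈ nhds m := Metric.ball_mem_nhds m (by linarith)
  have hcont : ∀ m' ∈ Metric.ball m ((1 - m) / 2),
      Continuous fun θ ↦ 1 / √(1 - m' * sin θ ^ 2) :=
    fun m' hm' ↦ continuous_const.div (by fun_prop)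
      fun θ ↦ (sqrt_pos.2 (hδ.trans_le (hlow m' hm' θ))).ne'
  have hderiv := hasDerivAt_integral_of_dominated_loc_of_deriv_le (μ := volume) (a := 0)
    (b := π / 2) (F := fun m θ ↦ 1 / √(1 - m * sin θ ^ 2))
    (F' := fun m θ ↦ sin θ ^ 2 / ((1 - m * sin θ ^ 2) * √(1 - m * sin θ ^ 2)) / 2)
    (bound := fun _ ↦ 1 / (δ * √δ) / 2) hball
    (Filter.eventually_of_mem hball fun m' hm' ↦ (hcont m' hm').aestronglyMeasurable)
    ((hcont m (Metric.mem_ball_self (by linarith))).intervalIntegrable _ _)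
    ((continuous_sin_sq_div_one_sub_mul_sin_sq_mul_sqrt hm).div_const 2).aestronglyMeasurable
    (Filter.Eventually.of_forall fun θ _ m' hm' ↦ by
      have h := hlow m' hm' θ
      rw [norm_of_nonneg (div_nonneg (div_nonneg (sq_nonneg _)
        (mul_nonneg (by linarith) (sqrt_nonneg _))) zero_le_two)]
      gcongr
      · exact sin_sq_le_one θ
      · linarith)
    intervalIntegrable_const
    (Filter.Eventually.of_forall fun θ _ m' hm' ↦
      hasDerivAt_one_div_sqrt_one_sub_mul (hδ.trans_le (hlow m' hm' θ)))
  refine hderiv.2.congr_deriv ?_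
  rw [intervalIntegral.integral_div, integral_cos_sq_div_sqrt_eq hm, mul_comm 2,
    mul_div_mul_left _ _ (sub_pos.2 hm).ne']

lemma ellipticKParam_le {m : ℝ} (hm₀ : 0 ≤ m) (hm₁ : m < 1) :
    ellipticKParam m ≤ π / 2 - log (1 - m) / 2 := by
  have hK (x : ℝ) (hx : x ∈ Icc 0 m) := hasDerivAt_ellipticKParam (hx.2.trans_lt hm₁)
  have hB (x : ℝ) (hx : x ∈ Icc 0 m) :
      HasDerivAt (fun x ↦ π / 2 - log (1 - x) / 2) (1 / (2 * (1 - x))) x :=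
    ((((hasDerivAt_id' x).const_sub 1).log (sub_pos.2 (hx.2.trans_lt hm₁)).ne').div_const
      2).const_sub (π / 2) |>.congr_deriv (by field_simp)
  refine image_le_of_deriv_right_le_deriv_boundary (a := 0) (b := m)
    (fun x hx ↦ (hK x hx).continuousAt.continuousWithinAt)
    (fun x hx ↦ (hK x (Ico_subset_Icc_self hx)).hasDerivWithinAt)
    (by simp [ellipticKParam]) (fun x hx ↦ (hB x hx).continuousAt.continuousWithinAt)
    (fun x hx ↦ (hB x (Ico_subset_Icc_self hx)).hasDerivWithinAt) (fun x hx ↦ ?_)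
    ⟨hm₀, le_rfl⟩
  have hx₁ : 0 < 1 - x := by linarith [hx.2]
  gcongr
  exact integral_cos_sq_div_sqrt_le_one (by linarith)

theorem ellipticK_le (k : ℝ) (hk : k ∈ Set.Ioo (-1 : ℝ) 1) :
    ellipticK k ≤ (π / 2) * (1 - (1 / π) * Real.log (1 - k ^ 2)) := by
  have hk2 : k ^ 2 < 1 := by rw [sq_lt_one_iff_abs_lt_one, abs_lt]; exact hk
  calc ellipticK k = ellipticKParam (k ^ 2) := rfl
    _ ≤ π / 2 - log (1 - k ^ 2) / 2 := ellipticKParam_le (sq_nonneg k) hk2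
    _ = (π / 2) * (1 - (1 / π) * Real.log (1 - k ^ 2)) := by field_simp
end

section
/- For a complex number λ = μ + iν with μ ≠ 0, the integral ∫₀^∞ dt / |t² + λ²| is at most (π/(2|λ|)) · (1 − (1/π) log(μ² / |λ|²)). -/
/-!
Write `r = ‖λ‖` and `a = |Re λ| / r ∈ (0, 1]`. Since `‖t² + λ²‖² = (t² - r²)² + (2 Re λ t)²`, the
substitution `v = (t² - r²) / (2 r t)`, a bijection of `(0, ∞)` onto `ℝ`, turns the integral into
`r⁻¹ K(a)` with `K(a) = ∫₀^∞ dv / (√(1 + v²) √(v² + a²))` (which is `π / (2 AGM(1, a))`).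
Two elementary bounds on `K` cover `(0, 1]` between them: Cauchy–Schwarz,
`(v² + a)² ≤ (1 + v²)(v² + a²)`, gives `K(a) ≤ π / (2√a)`, sharp at `a = 1`; dropping `√(1 + v²)`
on `(0, √a]` and `a²` on `(√a, ∞)` gives `K(a) ≤ 2 arsinh (1/√a)`, of the right order
`log (1/a)` as `a → 0`. The switch-over at `1/√a ≈ 1.545` leaves only a few thousandths to spare.
-/

open MeasureTheory Real Set Filter Topology

lemma exp_pi_div_four_ge_d3 : (2.192 : ℝ) ≤ exp (π / 4) := by
  calc (2.192 : ℝ) ≤ ∑ i ∈ Finset.range 7, (0.785 : ℝ) ^ i / i.factorial := by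
        norm_num [Finset.sum_range_succ, Nat.factorial]
    _ ≤ exp 0.785 := sum_le_exp_of_nonneg (by norm_num) 7
    _ ≤ exp (π / 4) := exp_le_exp.2 (by linarith [pi_gt_d2])

lemma arsinh_le_pi_div_four_add_log {b : ℝ} (hb : 1.545 ≤ b) :
    arsinh b ≤ π / 4 + log b := by
  have hb0 : 0 < b := by linarith
  have hsqrt : √(1 + b ^ 2) ≤ 1.192 * b := by
    rw [sqrt_le_left (by positivity)]
    nlinarith
  calc arsinh b = log (b + √(1 + b ^ 2)) := rfl
    _ ≤ log (2.192 * b) := log_le_log (by positivity) (by linarith)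
    _ = log 2.192 + log b := log_mul (by norm_num) hb0.ne'
    _ ≤ π / 4 + log b := by
        gcongr
        exact (log_le_iff_le_exp (by norm_num)).2 exp_pi_div_four_ge_d3

lemma pi_div_two_mul_le_add_log {b : ℝ} (hb1 : 1 ≤ b) (hb : b ≤ 1.545) :
    π / 2 * b ≤ π / 2 + 2 * log b := by
  have hlog : 2 * (b - 1) / (b + 1) ≤ log b := by
    simpa [sub_add_cancel, show b - 1 + 2 = b + 1 by ring] using
      le_log_one_add_of_nonneg (sub_nonneg.2 hb1)
  have hpi : π * (b + 1) ≤ 8 := by nlinarith [pi_lt_d4, pi_pos]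
  have key : π / 2 * (b - 1) ≤ 4 * (b - 1) / (b + 1) := by
    rw [le_div_iff₀ (by linarith)]
    nlinarith [mul_le_mul_of_nonneg_left hpi (sub_nonneg.2 hb1)]
  linarith [show 4 * (b - 1) / (b + 1) = 2 * (2 * (b - 1) / (b + 1)) by ring]

lemma min_le_pi_div_two_add_two_mul_log {b : ℝ} (hb : 1 ≤ b) :
    min (π / 2 * b) (2 * arsinh b) ≤ π / 2 + 2 * log b := by
  rcases le_total b 1.545 with hb' | hb'
  · exact (min_le_left _ _).trans (pi_div_two_mul_le_add_log hb hb')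
  · exact (min_le_right _ _).trans (by linarith [arsinh_le_pi_div_four_add_log hb'])

lemma inv_sqrt_mul_sqrt_le_inv_sq_add {a : ℝ} (ha : 0 < a) (v : ℝ) :
    (√(1 + v ^ 2) * √(v ^ 2 + a ^ 2))⁻¹ ≤ (v ^ 2 + a)⁻¹ := by
  apply inv_anti₀ (by positivity)
  rw [← sqrt_mul (by positivity), le_sqrt (by positivity) (by positivity)]
  nlinarith [sq_nonneg (v * (1 - a))]

lemma hasDerivAt_arctan_div_sqrt {a : ℝ} (ha : 0 < a) (v : ℝ) :
    HasDerivAt (fun v => arctan (v / √a) / √a) (v ^ 2 + a)⁻¹ v := by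
  refine (((hasDerivAt_arctan' (v / √a)).comp v
    ((hasDerivAt_id v).div_const √a)).div_const √a).congr_deriv ?_
  field_simp
  rw [sq_sqrt ha.le]
  ring

lemma tendsto_arctan_div_sqrt {a : ℝ} (ha : 0 < a) :
    Tendsto (fun v => arctan (v / √a) / √a) atTop (𝓝 (π / (2 * √a))) := by
  have := ((tendsto_nhds_of_tendsto_nhdsWithin tendsto_arctan_atTop).comp
    (tendsto_id.atTop_div_const (sqrt_pos.2 ha))).div_const √a
  rwa [div_div] at this

lemma integrableOn_Ioi_inv_sq_add {a : ℝ} (ha : 0 < a) :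
    IntegrableOn (fun v : ℝ => (v ^ 2 + a)⁻¹) (Ioi 0) :=
  integrableOn_Ioi_deriv_of_nonneg' (fun v _ => hasDerivAt_arctan_div_sqrt ha v)
    (fun v _ => by positivity) (tendsto_arctan_div_sqrt ha)

lemma integral_Ioi_inv_sq_add {a : ℝ} (ha : 0 < a) :
    ∫ v in Ioi 0, (v ^ 2 + a)⁻¹ = π / (2 * √a) := by
  rw [integral_Ioi_of_hasDerivAt_of_nonneg' (fun v _ => hasDerivAt_arctan_div_sqrt ha v)
    (fun v _ => by positivity) (tendsto_arctan_div_sqrt ha)]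
  simp

lemma integrableOn_Ioi_inv_sqrt_mul_sqrt {a : ℝ} (ha : 0 < a) :
    IntegrableOn (fun v => (√(1 + v ^ 2) * √(v ^ 2 + a ^ 2))⁻¹) (Ioi 0) := by
  refine (integrableOn_Ioi_inv_sq_add ha).mono' (by fun_prop) (ae_of_all _ fun v => ?_)
  rw [norm_of_nonneg (by positivity)]
  exact inv_sqrt_mul_sqrt_le_inv_sq_add ha v

lemma integral_Ioi_inv_sqrt_mul_sqrt_le_pi_div_two_mul_sqrt {a : ℝ} (ha : 0 < a) :
    ∫ v in Ioi 0, (√(1 + v ^ 2) * √(v ^ 2 + a ^ 2))⁻¹ ≤ π / (2 * √a) := by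
  rw [← integral_Ioi_inv_sq_add ha]
  exact setIntegral_mono_on (integrableOn_Ioi_inv_sqrt_mul_sqrt ha)
    (integrableOn_Ioi_inv_sq_add ha) measurableSet_Ioi
    fun v _ => inv_sqrt_mul_sqrt_le_inv_sq_add ha v

lemma hasDerivAt_arsinh_div {a : ℝ} (ha : 0 < a) (v : ℝ) :
    HasDerivAt (fun v => arsinh (v / a)) (√(v ^ 2 + a ^ 2))⁻¹ v := by
  refine ((hasDerivAt_arsinh (v / a)).comp v ((hasDerivAt_id v).div_const a)).congr_deriv ?_
  have : √(1 + (v / a) ^ 2) = √(v ^ 2 + a ^ 2) / a := by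
    rw [sqrt_eq_iff_mul_self_eq_of_pos (by positivity), div_mul_div_comm,
      mul_self_sqrt (by positivity)]
    field_simp
    ring
  simp only [this]
  field_simp

lemma continuous_inv_sqrt_sq_add_sq {a : ℝ} (ha : 0 < a) :
    Continuous fun v : ℝ => (√(v ^ 2 + a ^ 2))⁻¹ :=
  (by fun_prop : Continuous fun v : ℝ => √(v ^ 2 + a ^ 2)).inv₀ fun v => by positivity

lemma integral_Ioc_inv_sqrt_sq_add_sq {a c : ℝ} (ha : 0 < a) (hc : 0 ≤ c) :
    ∫ v in Ioc 0 c, (√(v ^ 2 + a ^ 2))⁻¹ = arsinh (c / a) := by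
  rw [← intervalIntegral.integral_of_le hc, intervalIntegral.integral_eq_sub_of_hasDerivAt
    (fun v _ => hasDerivAt_arsinh_div ha v)
    ((continuous_inv_sqrt_sq_add_sq ha).intervalIntegrable 0 c)]
  simp

lemma hasDerivAt_neg_arsinh_inv {v : ℝ} (hv : 0 < v) :
    HasDerivAt (fun v => -arsinh v⁻¹) (v * √(1 + v ^ 2))⁻¹ v := by
  refine ((hasDerivAt_arsinh v⁻¹).comp v (hasDerivAt_inv hv.ne')).neg.congr_deriv ?_
  have : √(1 + v⁻¹ ^ 2) = √(1 + v ^ 2) / v := by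
    rw [sqrt_eq_iff_mul_self_eq_of_pos (by positivity), div_mul_div_comm,
      mul_self_sqrt (by positivity)]
    field_simp
    ring
  simp only [this]
  field_simp

lemma tendsto_neg_arsinh_inv : Tendsto (fun v : ℝ => -arsinh v⁻¹) atTop (𝓝 0) := by
  simpa using (continuous_arsinh.tendsto 0).comp tendsto_inv_atTop_zero |>.neg

lemma integrableOn_Ioi_inv_mul_sqrt_one_add_sq {c : ℝ} (hc : 0 < c) :
    IntegrableOn (fun v : ℝ => (v * √(1 + v ^ 2))⁻¹) (Ioi c) :=
  integrableOn_Ioi_deriv_of_nonneg' (fun _ hv => hasDerivAt_neg_arsinh_inv (hc.trans_le hv))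
    (fun v hv => by have : 0 < v := hc.trans hv; positivity) tendsto_neg_arsinh_inv

lemma integral_Ioi_inv_mul_sqrt_one_add_sq {c : ℝ} (hc : 0 < c) :
    ∫ v in Ioi c, (v * √(1 + v ^ 2))⁻¹ = arsinh c⁻¹ := by
  rw [integral_Ioi_of_hasDerivAt_of_nonneg'
    (fun _ hv => hasDerivAt_neg_arsinh_inv (hc.trans_le hv))
    (fun v hv => by have : 0 < v := hc.trans hv; positivity) tendsto_neg_arsinh_inv]
  simp

lemma integral_Ioi_inv_sqrt_mul_sqrt_le_arsinh_add {a c : ℝ} (ha : 0 < a) (hc : 0 < c) :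
    ∫ v in Ioi 0, (√(1 + v ^ 2) * √(v ^ 2 + a ^ 2))⁻¹ ≤ arsinh (c / a) + arsinh c⁻¹ := by
  have hint := integrableOn_Ioi_inv_sqrt_mul_sqrt ha
  have head : ∫ v in Ioc 0 c, (√(1 + v ^ 2) * √(v ^ 2 + a ^ 2))⁻¹ ≤ arsinh (c / a) := by
    rw [← integral_Ioc_inv_sqrt_sq_add_sq ha hc.le]
    refine setIntegral_mono_on (hint.mono_set Ioc_subset_Ioi_self)
      ((continuous_inv_sqrt_sq_add_sq ha).integrableOn_Icc.mono_set Ioc_subset_Icc_self)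
      measurableSet_Ioc fun v _ => ?_
    gcongr
    exact le_mul_of_one_le_left (sqrt_nonneg _) (one_le_sqrt.2 (by nlinarith))
  have tail : ∫ v in Ioi c, (√(1 + v ^ 2) * √(v ^ 2 + a ^ 2))⁻¹ ≤ arsinh c⁻¹ := by
    rw [← integral_Ioi_inv_mul_sqrt_one_add_sq hc]
    refine setIntegral_mono_on (hint.mono_set (Ioi_subset_Ioi hc.le))
      (integrableOn_Ioi_inv_mul_sqrt_one_add_sq hc) measurableSet_Ioi fun v hv => ?_
    have hv : 0 < v := hc.trans hv
    rw [mul_comm v]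
    gcongr
    exact le_sqrt_of_sq_le (by nlinarith)
  rw [← Ioc_union_Ioi_eq_Ioi hc.le, setIntegral_union Ioc_disjoint_Ioi_same measurableSet_Ioi
    (hint.mono_set Ioc_subset_Ioi_self) (hint.mono_set (Ioi_subset_Ioi hc.le))]
  exact add_le_add head tail

lemma norm_ofReal_sq_add_sq (z : ℂ) (t : ℝ) :
    ‖(t : ℂ) ^ 2 + z ^ 2‖ = √((t ^ 2 - ‖z‖ ^ 2) ^ 2 + (2 * z.re * t) ^ 2) := by
  rw [Complex.norm_def, Complex.sq_norm, Complex.normSq_apply, Complex.normSq_apply]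
  congr 1
  simp only [Complex.add_re, Complex.add_im, pow_two, Complex.mul_re, Complex.mul_im,
    Complex.ofReal_re, Complex.ofReal_im]
  ring

lemma sqrt_one_add_sq_div {r t : ℝ} (hr : 0 < r) (ht : 0 < t) :
    √(1 + ((t ^ 2 - r ^ 2) / (2 * r * t)) ^ 2) = (t ^ 2 + r ^ 2) / (2 * r * t) := by
  rw [sqrt_eq_iff_mul_self_eq_of_pos (by positivity)]
  field_simp
  ring

lemma sqrt_sq_div_add_sq {r t : ℝ} (hr : 0 < r) (ht : 0 < t) (m : ℝ) :
    √(((t ^ 2 - r ^ 2) / (2 * r * t)) ^ 2 + (m / r) ^ 2)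
      = √((t ^ 2 - r ^ 2) ^ 2 + (2 * m * t) ^ 2) / (2 * r * t) := by
  rw [show ((t ^ 2 - r ^ 2) / (2 * r * t)) ^ 2 + (m / r) ^ 2
      = ((t ^ 2 - r ^ 2) ^ 2 + (2 * m * t) ^ 2) / (2 * r * t) ^ 2 by field_simp,
    sqrt_div' _ (by positivity), sqrt_sq (by positivity)]

lemma integral_Ioi_inv_sqrt_sq_sub_sq_add_sq {r : ℝ} (hr : 0 < r) (m : ℝ) :
    ∫ t in Ioi 0, (√((t ^ 2 - r ^ 2) ^ 2 + (2 * m * t) ^ 2))⁻¹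
      = r⁻¹ * ∫ v in Ioi 0, (√(1 + v ^ 2) * √(v ^ 2 + (m / r) ^ 2))⁻¹ := by
  set g : ℝ → ℝ := fun v => (√(1 + v ^ 2) * √(v ^ 2 + (m / r) ^ 2))⁻¹
  set f : ℝ → ℝ := fun t => (t ^ 2 - r ^ 2) / (2 * r * t)
  have hderiv : ∀ t ∈ Ioi (0 : ℝ),
      HasDerivWithinAt f ((t ^ 2 + r ^ 2) / (2 * r * t ^ 2)) (Ioi 0) t := by
    intro t ht
    have ht : t ≠ 0 := ne_of_gt ht
    refine (((hasDerivAt_pow 2 t).sub_const (r ^ 2)).div ((hasDerivAt_id t).const_mul (2 * r))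
      (by positivity)).hasDerivWithinAt.congr_deriv ?_
    simp only [id]
    field_simp
    ring
  have hinj : InjOn f (Ioi 0) := by
    intro s hs t ht hst
    have hs : 0 < s := hs
    have ht : 0 < t := ht
    simp only [f] at hst
    field_simp at hst
    nlinarith [mul_pos hs ht, sq_nonneg (s - t)]
  have himage : f '' Ioi 0 = univ := by
    refine eq_univ_of_forall fun v => ⟨r * (v + √(v ^ 2 + 1)), ?_, ?_⟩
    · have : -v < √(v ^ 2 + 1) := lt_sqrt_of_sq_lt (by linarith)
      exact mul_pos hr (by linarith)
    · have hs := sq_sqrt (by positivity : (0 : ℝ) ≤ v ^ 2 + 1)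
      have : 0 < v + √(v ^ 2 + 1) := by
        linarith [lt_sqrt_of_sq_lt (by linarith : (-v) ^ 2 < v ^ 2 + 1)]
      simp only [f]
      field_simp
      nlinarith
  have hpoint : ∀ t ∈ Ioi (0 : ℝ), |(t ^ 2 + r ^ 2) / (2 * r * t ^ 2)| • g (f t)
      = 2 * r * (√((t ^ 2 - r ^ 2) ^ 2 + (2 * m * t) ^ 2))⁻¹ := by
    intro t ht
    have ht : 0 < t := ht
    simp only [g, f, smul_eq_mul, sqrt_one_add_sq_div hr ht, sqrt_sq_div_add_sq hr ht]
    rw [abs_of_pos (by positivity)]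
    field_simp
  have hfull :
      ∫ v, g v = 2 * r * ∫ t in Ioi 0, (√((t ^ 2 - r ^ 2) ^ 2 + (2 * m * t) ^ 2))⁻¹ := by
    rw [← setIntegral_univ, ← himage, integral_image_eq_integral_abs_deriv_smul measurableSet_Ioi
      hderiv hinj, setIntegral_congr_fun measurableSet_Ioi hpoint, integral_const_mul]
  have heven : ∫ v, g v = 2 * ∫ v in Ioi 0, g v := by
    simpa only [g, sq_abs] using integral_comp_abs (f := g)
  rw [eq_inv_mul_iff_mul_eq₀ hr.ne']
  linarith

theorem integral_one_div_abs_sq_add_sq_le (lam : ℂ) (h : lam.re ≠ 0) :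
    ∫ t in Set.Ioi (0 : ℝ), 1 / ‖(t : ℂ) ^ 2 + lam ^ 2‖
      ≤ (π / (2 * ‖lam‖)) *
        (1 - (1 / π) * Real.log (lam.re ^ 2 / (‖lam‖) ^ 2)) := by
  have hr : 0 < ‖lam‖ := norm_pos_iff.2 fun h0 => h (by simp [h0])
  set a := |lam.re| / ‖lam‖ with ha_def
  have ha : 0 < a := div_pos (abs_pos.2 h) hr
  have hsqa : √a ≤ 1 := sqrt_le_one.2 (div_le_one_of_le₀ (Complex.abs_re_le_norm lam) hr.le)
  have hb : 1 ≤ (√a)⁻¹ := one_le_inv₀ (sqrt_pos.2 ha) |>.2 hsqa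
  have hK : ∫ v in Ioi 0, (√(1 + v ^ 2) * √(v ^ 2 + a ^ 2))⁻¹ ≤ π / 2 + 2 * log (√a)⁻¹ := by
    refine le_trans (le_min ?_ ?_) (min_le_pi_div_two_add_two_mul_log hb)
    · exact (integral_Ioi_inv_sqrt_mul_sqrt_le_pi_div_two_mul_sqrt ha).trans_eq (by ring)
    · refine (integral_Ioi_inv_sqrt_mul_sqrt_le_arsinh_add ha (sqrt_pos.2 ha)).trans_eq ?_
      rw [sqrt_div_self', one_div, two_mul]
  have hlog : log (lam.re ^ 2 / ‖lam‖ ^ 2) = -4 * log (√a)⁻¹ := by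
    rw [← sq_abs, ← div_pow, ← ha_def, log_pow, log_inv, log_sqrt ha.le]
    ring
  calc ∫ t in Ioi (0 : ℝ), 1 / ‖(t : ℂ) ^ 2 + lam ^ 2‖
      = ∫ t in Ioi (0 : ℝ), (√((t ^ 2 - ‖lam‖ ^ 2) ^ 2 + (2 * lam.re * t) ^ 2))⁻¹ := by
        simp only [norm_ofReal_sq_add_sq, one_div]
    _ = ‖lam‖⁻¹ * ∫ v in Ioi 0, (√(1 + v ^ 2) * √(v ^ 2 + a ^ 2))⁻¹ := by
        simp only [integral_Ioi_inv_sqrt_sq_sub_sq_add_sq hr, ha_def, div_pow, sq_abs]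
    _ ≤ ‖lam‖⁻¹ * (π / 2 + 2 * log (√a)⁻¹) := by gcongr
    _ = (π / (2 * ‖lam‖)) * (1 - (1 / π) * log (lam.re ^ 2 / ‖lam‖ ^ 2)) := by
        rw [hlog]
        field_simp
        ring
end

section
/- Let λ₁,…,λₙ be complex numbers with nonzero real parts, and t₁ = √2 · √(Σⱼ|λⱼ|²). Then ∫₀^{t₁} maxⱼ (1/|t² + λⱼ²|²) dt ≤ (π/4) Σⱼ 1/(|λⱼ|² |Re(λⱼ)|). -/
/-!
Bound the maximum by the sum and each summand's integral over `[0, t₁]` by its integral over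
`(0, ∞)`. For `λ = a + b i` with `a > 0` (replace `a` by `|a|`, which changes nothing),
`|t² + λ²|² = q(t) := ((t - b)² + a²)((t + b)² + a²)`, and
`∫₀^∞ dt / q = π / (4 a |λ|²)` follows from two facts:
* `2a (t² + |λ|²) / q` is the derivative of `arctan ((t - b) / a) + arctan ((t + b) / a)`, which
  increases from `0` to `π`;
* the inversion `t ↦ |λ|² / t` turns `dt / q` into `t² dt / (|λ|² q)`, so
  `∫ t² / q = |λ|² ∫ 1 / q`.
-/

open MeasureTheory Real Filter Set Topology

def quartic (a b t : ℝ) : ℝ := ((t - b) ^ 2 + a ^ 2) * ((t + b) ^ 2 + a ^ 2)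

lemma sq_norm_ofReal_sq_add_sq (t : ℝ) (z : ℂ) :
    ‖(t : ℂ) ^ 2 + z ^ 2‖ ^ 2 = quartic |z.re| z.im t := by
  rw [Complex.sq_norm, Complex.normSq_apply, quartic, sq_abs]
  simp only [Complex.add_re, Complex.add_im, sq, Complex.mul_re, Complex.mul_im,
    Complex.ofReal_re, Complex.ofReal_im]
  ring

section quartic

variable {a b : ℝ}

lemma quartic_pos (ha : a ≠ 0) (t : ℝ) : 0 < quartic a b t := by
  unfold quartic; positivity

@[fun_prop]
lemma continuous_quartic (a b : ℝ) : Continuous (quartic a b) := by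
  unfold quartic; fun_prop

lemma quartic_div {t : ℝ} (ht : t ≠ 0) :
    quartic a b ((a ^ 2 + b ^ 2) / t) = (a ^ 2 + b ^ 2) ^ 2 * quartic a b t / t ^ 4 := by
  unfold quartic
  field_simp
  ring

lemma hasDerivAt_arctan_add_arctan (ha : a ≠ 0) (t : ℝ) :
    HasDerivAt (fun t ↦ arctan ((t - b) / a) + arctan ((t + b) / a))
      (2 * a * ((t ^ 2 + (a ^ 2 + b ^ 2)) / quartic a b t)) t := by
  have hsub := (((hasDerivAt_id' t).sub_const b).div_const a).arctan
  have hadd := (((hasDerivAt_id' t).add_const b).div_const a).arctan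
  refine (hsub.add hadd).congr_deriv ?_
  have := quartic_pos (b := b) ha t
  unfold quartic at *
  field_simp
  ring

lemma tendsto_arctan_add_arctan_atTop (ha : 0 < a) :
    Tendsto (fun t ↦ arctan ((t - b) / a) + arctan ((t + b) / a)) atTop (𝓝 π) := by
  have h : ∀ c : ℝ, Tendsto (fun t ↦ arctan ((t + c) / a)) atTop (𝓝 (π / 2)) := fun c ↦
    (tendsto_arctan_atTop.mono_right nhdsWithin_le_nhds).comp
      ((tendsto_atTop_add_const_right _ c tendsto_id).atTop_div_const ha)
  simpa [sub_eq_add_neg] using (h (-b)).add (h b)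

lemma sq_add_div_quartic_nonneg (ha : a ≠ 0) (t : ℝ) :
    0 ≤ (t ^ 2 + (a ^ 2 + b ^ 2)) / quartic a b t :=
  div_nonneg (by positivity) (quartic_pos ha t).le

lemma integral_Ioi_sq_div_quartic (hs : 0 < a ^ 2 + b ^ 2) :
    ∫ t in Ioi 0, t ^ 2 / quartic a b t
      = (a ^ 2 + b ^ 2) * ∫ t in Ioi 0, 1 / quartic a b t := by
  have hsubst := integral_comp_rpow_Ioi (fun y ↦ 1 / quartic a b ((a ^ 2 + b ^ 2) * y))
    (p := -1) (by norm_num)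
  rw [integral_comp_mul_left_Ioi (fun y ↦ 1 / quartic a b y) 0 hs, mul_zero] at hsubst
  have hinv : ∫ t in Ioi 0,
        (|(-1 : ℝ)| * t ^ ((-1 : ℝ) - 1)) •
          (1 / quartic a b ((a ^ 2 + b ^ 2) * t ^ (-1 : ℝ)))
      = ((a ^ 2 + b ^ 2) ^ 2)⁻¹ * ∫ t in Ioi 0, t ^ 2 / quartic a b t := by
    rw [← integral_const_mul]
    refine setIntegral_congr_fun measurableSet_Ioi fun t (ht : 0 < t) ↦ ?_
    rw [rpow_neg_one, ← div_eq_mul_inv, quartic_div ht.ne', show (-1 : ℝ) - 1 = -2 by norm_num,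
      rpow_neg ht.le, rpow_two, smul_eq_mul, abs_neg, abs_one]
    field_simp
  rw [hinv, smul_eq_mul] at hsubst
  field_simp at hsubst
  linear_combination hsubst

lemma integrableOn_Ioi_sq_add_div_quartic (ha : 0 < a) :
    IntegrableOn (fun t ↦ (t ^ 2 + (a ^ 2 + b ^ 2)) / quartic a b t) (Ioi 0) := by
  have hint := integrableOn_Ioi_deriv_of_nonneg' (a := 0)
    (fun t _ ↦ hasDerivAt_arctan_add_arctan ha.ne' t)
    (fun t _ ↦ mul_nonneg (by positivity) (sq_add_div_quartic_nonneg ha.ne' t))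
    (tendsto_arctan_add_arctan_atTop (b := b) ha)
  have := hint.const_mul (2 * a)⁻¹
  simp only [← mul_assoc, inv_mul_cancel₀ (by positivity : 2 * a ≠ 0), one_mul] at this
  exact this

lemma integral_Ioi_sq_add_div_quartic (ha : 0 < a) :
    ∫ t in Ioi 0, (t ^ 2 + (a ^ 2 + b ^ 2)) / quartic a b t = π / (2 * a) := by
  have hval := integral_Ioi_of_hasDerivAt_of_nonneg' (a := 0)
    (fun t _ ↦ hasDerivAt_arctan_add_arctan ha.ne' t)
    (fun t _ ↦ mul_nonneg (by positivity) (sq_add_div_quartic_nonneg ha.ne' t))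
    (tendsto_arctan_add_arctan_atTop (b := b) ha)
  rw [integral_const_mul, zero_sub, zero_add, neg_div, arctan_neg, neg_add_cancel,
    sub_zero] at hval
  field_simp
  linarith

lemma integrableOn_Ioi_inv_quartic (ha : 0 < a) :
    IntegrableOn (fun t ↦ 1 / quartic a b t) (Ioi 0) := by
  refine ((integrableOn_Ioi_sq_add_div_quartic (b := b) ha).div_const (a ^ 2 + b ^ 2)).mono'
    ((continuous_quartic a b).measurable.const_div 1).aestronglyMeasurable
    (Eventually.of_forall fun t ↦ ?_)
  have := quartic_pos (b := b) ha.ne' t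
  rw [norm_of_nonneg (by positivity), div_right_comm]
  gcongr
  rw [le_div_iff₀ (by positivity)]
  linarith [sq_nonneg t]

lemma integral_Ioi_inv_quartic (ha : 0 < a) :
    ∫ t in Ioi 0, 1 / quartic a b t = π / (4 * a * (a ^ 2 + b ^ 2)) := by
  have hint := integrableOn_Ioi_inv_quartic (b := b) ha
  have hint_sq : IntegrableOn (fun t ↦ t ^ 2 / quartic a b t) (Ioi 0) := by
    refine (integrableOn_Ioi_sq_add_div_quartic (b := b) ha).mono'
      (by fun_prop : Measurable fun t ↦ t ^ 2 / quartic a b t).aestronglyMeasurable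
      (Eventually.of_forall fun t ↦ ?_)
    have := quartic_pos (b := b) ha.ne' t
    rw [norm_of_nonneg (by positivity)]
    gcongr
    exact le_add_of_nonneg_right (by positivity)
  have hsplit : ∫ t in Ioi 0, (t ^ 2 + (a ^ 2 + b ^ 2)) / quartic a b t
      = (∫ t in Ioi 0, t ^ 2 / quartic a b t)
        + (a ^ 2 + b ^ 2) * ∫ t in Ioi 0, 1 / quartic a b t := by
    have := integral_add hint_sq (hint.const_mul (a ^ 2 + b ^ 2))
    simp only [integral_const_mul] at this
    rw [← this]
    congr with t
    ring
  rw [integral_Ioi_sq_add_div_quartic ha,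
    integral_Ioi_sq_div_quartic (a := a) (b := b) (by positivity)] at hsplit
  rw [eq_div_iff (by positivity)]
  field_simp at hsplit
  linear_combination -hsplit

end quartic

section complex

variable {z : ℂ}

lemma integrableOn_Ioi_inv_sq_norm_ofReal_sq_add_sq (hz : z.re ≠ 0) :
    IntegrableOn (fun t : ℝ ↦ 1 / ‖(t : ℂ) ^ 2 + z ^ 2‖ ^ 2) (Ioi 0) := by
  simpa only [sq_norm_ofReal_sq_add_sq] using
    integrableOn_Ioi_inv_quartic (b := z.im) (abs_pos.2 hz)

lemma integral_Ioi_inv_sq_norm_ofReal_sq_add_sq (hz : z.re ≠ 0) :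
    ∫ t : ℝ in Ioi 0, 1 / ‖(t : ℂ) ^ 2 + z ^ 2‖ ^ 2
      = π / 4 * (1 / (‖z‖ ^ 2 * |z.re|)) := by
  simp only [sq_norm_ofReal_sq_add_sq]
  rw [integral_Ioi_inv_quartic (abs_pos.2 hz), sq_abs, Complex.sq_norm, Complex.normSq_apply]
  field_simp

end complex

theorem integral_iSup_le_sum_integral {ι α : Type*} [Fintype ι] [MeasurableSpace α]
    {μ : Measure α} {f : ι → α → ℝ} (hf_nonneg : ∀ i x, 0 ≤ f i x)
    (hf : ∀ i, Integrable (f i) μ) :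
    ∫ x, ⨆ i, f i x ∂μ ≤ ∑ i, ∫ x, f i x ∂μ := by
  rw [← integral_finsetSum _ fun i _ ↦ hf i]
  refine integral_mono_of_nonneg
    (Eventually.of_forall fun x ↦ Real.iSup_nonneg fun i ↦ hf_nonneg i x)
    (integrable_finsetSum _ fun i _ ↦ hf i) (Eventually.of_forall fun x ↦ ?_)
  exact Real.iSup_le
    (fun i ↦ Finset.single_le_sum (fun j _ ↦ hf_nonneg j x) (Finset.mem_univ i))
    (Finset.sum_nonneg fun j _ ↦ hf_nonneg j x)

theorem intervalIntegral_iSup_inv_sq_norm_le {ι : Type*} [Fintype ι] (lam : ι → ℂ)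
    (hre : ∀ j, (lam j).re ≠ 0) {T : ℝ} (hT : 0 ≤ T) :
    ∫ t in (0 : ℝ)..T, ⨆ j, 1 / ‖(t : ℂ) ^ 2 + lam j ^ 2‖ ^ 2
      ≤ π / 4 * ∑ j, 1 / (‖lam j‖ ^ 2 * |(lam j).re|) := by
  have hint j := integrableOn_Ioi_inv_sq_norm_ofReal_sq_add_sq (hre j)
  rw [intervalIntegral.integral_of_le hT, Finset.mul_sum]
  calc ∫ t in Ioc 0 T, ⨆ j, 1 / ‖(t : ℂ) ^ 2 + lam j ^ 2‖ ^ 2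
      ≤ ∑ j, ∫ t in Ioc 0 T, 1 / ‖(t : ℂ) ^ 2 + lam j ^ 2‖ ^ 2 :=
        integral_iSup_le_sum_integral (fun j t ↦ by positivity) fun j ↦
          (hint j).mono_set Ioc_subset_Ioi_self
    _ ≤ ∑ j, ∫ t : ℝ in Ioi 0, 1 / ‖(t : ℂ) ^ 2 + lam j ^ 2‖ ^ 2 :=
        Finset.sum_le_sum fun j _ ↦ setIntegral_mono_set (hint j)
          (Eventually.of_forall fun t ↦ by positivity) Ioc_subset_Ioi_self.eventuallyLE
    _ = ∑ j, π / 4 * (1 / (‖lam j‖ ^ 2 * |(lam j).re|)) :=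
        Finset.sum_congr rfl fun j _ ↦ integral_Ioi_inv_sq_norm_ofReal_sq_add_sq (hre j)

theorem integral_sup_le_general {n : ℕ} (lam : Fin n → ℂ)
    (hre : ∀ j, (lam j).re ≠ 0) :
    ∫ t in (0 : ℝ)..(Real.sqrt 2 * Real.sqrt (∑ j, ‖lam j‖ ^ 2)),
        ⨆ j, 1 / ‖(t : ℂ) ^ 2 + (lam j) ^ 2‖ ^ 2
      ≤ (π / 4) * ∑ j, 1 / (‖lam j‖ ^ 2 * |(lam j).re|) :=
  intervalIntegral_iSup_inv_sq_norm_le lam hre (by positivity)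

theorem integral_sup_le {n : ℕ} (hn : 0 < n) (lam : Fin n → ℂ)
    (hre : ∀ j, (lam j).re ≠ 0) :
    ∫ t in (0 : ℝ)..(Real.sqrt 2 * Real.sqrt (∑ j, ‖lam j‖ ^ 2)),
        ⨆ j, 1 / ‖(t : ℂ) ^ 2 + (lam j) ^ 2‖ ^ 2
      ≤ (π / 4) * ∑ j, 1 / (‖lam j‖ ^ 2 * |(lam j).re|) :=
  integral_sup_le_general lam hre
end
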